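/- arXiv:2306.15810 — 5 statements merged into one kernel-verified Lean document; each statement's English description precedes it below -/
import Mathlib

section
/- Let Φ be an N×N unitary matrix and f ∈ ℂ^N a nonzero vector, and let f̂ = Φ* f. Then ‖f‖₀ · ‖f̂‖₀ ≥ ‖Φ‖_∞^{-2}, where ‖f‖₀ denotes the number of nonzero entries and ‖Φ‖_∞ = max_{i,j} |Φ_{ij}|. -/
/-!
Let `i` maximize `‖f i‖`. Reconstructing `f = Φ f̂` gives `‖f i‖ ≤ C ‖f̂‖₁`, Cauchy–Schwarz on
the support of `f̂` gives `‖f̂‖₁² ≤ ‖f̂‖₀ ‖f̂‖₂²`, Parseval gives `‖f̂‖₂ = ‖f‖₂`, and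
`‖f‖₂² ≤ ‖f‖₀ ‖f i‖²`. Chaining these and cancelling `‖f i‖² > 0` yields `1 ≤ C² ‖f‖₀ ‖f̂‖₀`.
-/

open Finset Matrix

variable {ι 𝕜 : Type*} [Fintype ι] [RCLike 𝕜]

theorem Matrix.star_dotProduct_self_eq_sum_norm_sq (v : ι → 𝕜) :
    star v ⬝ᵥ v = ((∑ i, ‖v i‖ ^ 2 : ℝ) : 𝕜) := by
  simp [dotProduct, RCLike.conj_mul]

theorem Matrix.sum_norm_sq_mulVec_of_mem_unitaryGroup [DecidableEq ι] {U : Matrix ι ι 𝕜}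
    (hU : U ∈ unitaryGroup ι 𝕜) (v : ι → 𝕜) :
    ∑ i, ‖(U *ᵥ v) i‖ ^ 2 = ∑ i, ‖v i‖ ^ 2 := by
  have hUU : Uᴴ * U = 1 := Unitary.star_mul_self_of_mem hU
  have h : star (U *ᵥ v) ⬝ᵥ (U *ᵥ v) = star v ⬝ᵥ v := by
    rw [star_mulVec, ← dotProduct_mulVec, mulVec_mulVec, hUU, one_mulVec]
  simpa only [star_dotProduct_self_eq_sum_norm_sq, RCLike.ofReal_inj] using h

theorem Matrix.norm_mulVec_apply_le {m : Type*} {A : Matrix m ι 𝕜} {C : ℝ}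
    (hA : ∀ i j, ‖A i j‖ ≤ C) (v : ι → 𝕜) (i : m) :
    ‖(A *ᵥ v) i‖ ≤ C * ∑ j, ‖v j‖ :=
  calc ‖(A *ᵥ v) i‖ ≤ ∑ j, ‖A i j‖ * ‖v j‖ := by
        simpa only [mulVec, dotProduct, norm_mul] using norm_sum_le univ fun j => A i j * v j
    _ ≤ ∑ j, C * ‖v j‖ := by gcongr with j; exact hA i j
    _ = C * ∑ j, ‖v j‖ := (mul_sum ..).symm

section Support

variable {E : Type*} [SeminormedAddGroup E] [DecidableEq E]

theorem sum_filter_ne_zero_eq_sum_of_map_zero {M : Type*} [AddCommMonoid M] (v : ι → E)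
    {g : E → M} (hg : g 0 = 0) : ∑ i with v i ≠ 0, g (v i) = ∑ i, g (v i) :=
  sum_filter_of_ne fun i _ h hi => h (by rw [hi, hg])

theorem sq_sum_norm_le_card_support_mul_sum_norm_sq (v : ι → E) :
    (∑ i, ‖v i‖) ^ 2 ≤ #{i | v i ≠ 0} * ∑ i, ‖v i‖ ^ 2 := by
  rw [← sum_filter_ne_zero_eq_sum_of_map_zero v (g := (‖·‖)) norm_zero,
    ← sum_filter_ne_zero_eq_sum_of_map_zero v (g := (‖·‖ ^ 2)) (by simp)]
  exact sq_sum_le_card_mul_sum_sq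

theorem sum_norm_sq_le_card_support_mul_sq {v : ι → E} {M : ℝ} (hM : ∀ i, ‖v i‖ ≤ M) :
    ∑ i, ‖v i‖ ^ 2 ≤ #{i | v i ≠ 0} * M ^ 2 := by
  rw [← sum_filter_ne_zero_eq_sum_of_map_zero v (g := (‖·‖ ^ 2)) (by simp),
    ← nsmul_eq_mul, ← sum_const]
  gcongr with i
  exact hM i

end Support

theorem Matrix.one_le_sq_mul_card_support_mul_card_support [DecidableEq ι] [DecidableEq 𝕜]
    {U : Matrix ι ι 𝕜} (hU : U ∈ unitaryGroup ι 𝕜) {C : ℝ} (hC : ∀ i j, ‖U i j‖ ≤ C)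
    {f : ι → 𝕜} (hf : f ≠ 0) :
    1 ≤ C ^ 2 * (#{i | f i ≠ 0} * #{ℓ | (Uᴴ *ᵥ f) ℓ ≠ 0}) := by
  have hrec : U *ᵥ (Uᴴ *ᵥ f) = f := by
    rw [mulVec_mulVec, show U * Uᴴ = 1 from Unitary.mul_star_self_of_mem hU, one_mulVec]
  have hparseval := sum_norm_sq_mulVec_of_mem_unitaryGroup (Unitary.star_mem hU) f
  generalize Uᴴ *ᵥ f = fhat at hrec hparseval ⊢
  obtain ⟨i₀, hi₀⟩ := Function.ne_iff.mp hf
  have : Nonempty ι := ⟨i₀⟩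
  obtain ⟨i, hi⟩ := Finite.exists_max (‖f ·‖)
  have hpos : 0 < ‖f i‖ := (norm_pos_iff.mpr hi₀).trans_le (hi i₀)
  have key : ‖f i‖ ^ 2 ≤ C ^ 2 * (#{i | f i ≠ 0} * #{ℓ | fhat ℓ ≠ 0}) * ‖f i‖ ^ 2 :=
    calc ‖f i‖ ^ 2 ≤ (C * ∑ ℓ, ‖fhat ℓ‖) ^ 2 := by
          gcongr
          rw [← hrec]
          exact norm_mulVec_apply_le hC fhat i
      _ = C ^ 2 * (∑ ℓ, ‖fhat ℓ‖) ^ 2 := mul_pow ..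
      _ ≤ C ^ 2 * (#{ℓ | fhat ℓ ≠ 0} * ∑ ℓ, ‖fhat ℓ‖ ^ 2) := by
          gcongr
          exact sq_sum_norm_le_card_support_mul_sum_norm_sq fhat
      _ = C ^ 2 * (#{ℓ | fhat ℓ ≠ 0} * ∑ j, ‖f j‖ ^ 2) := by rw [hparseval]
      _ ≤ C ^ 2 * (#{ℓ | fhat ℓ ≠ 0} * (#{i | f i ≠ 0} * ‖f i‖ ^ 2)) := by
          gcongr
          exact sum_norm_sq_le_card_support_mul_sq hi
      _ = C ^ 2 * (#{i | f i ≠ 0} * #{ℓ | fhat ℓ ≠ 0}) * ‖f i‖ ^ 2 := by ring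
  exact (le_mul_iff_one_le_left (pow_pos hpos 2)).mp key

/-- supremum-norm uncertainty bound for a unitary matrix. -/
theorem stmt_0 (N : ℕ) (Φ : Matrix (Fin N) (Fin N) ℂ)
    (hΦ : Φ ∈ Matrix.unitaryGroup (Fin N) ℂ)
    (f : Fin N → ℂ) (hf : f ≠ 0)
    (C : ℝ) (hC : IsGreatest {r : ℝ | ∃ i j, r = ‖Φ i j‖} C)
    (fhat : Fin N → ℂ) (hfhat : fhat = Φᴴ.mulVec f) :
    (1 : ℝ) / C ^ 2 ≤
      ((Finset.univ.filter (fun i => f i ≠ 0)).card *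
        (Finset.univ.filter (fun ℓ => fhat ℓ ≠ 0)).card : ℝ) := by
  subst hfhat
  have h := one_le_sq_mul_card_support_mul_card_support hΦ (fun i j => hC.2 ⟨i, j, rfl⟩) hf
  exact div_le_of_le_mul₀ (sq_nonneg C) (by positivity) (by linarith)
end

section
/- Let Φ be an N×N unitary matrix, f ∈ ℂ^N nonzero, and f̂ = Φ* f. Then ‖f‖₀ · ‖f̂‖₀ ≥ min{ |K|·|S| : K ⊆ {1..N}, S ⊆ {1..N}, ‖Φ_{K×S}‖_F ≥ 1 }. -/
/-!
With `K = supp f` and `S = supp f̂` we have `f = Φ f̂`, so for `i ∈ K` Cauchy–Schwarz over `S` gives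
`|f i|² ≤ (∑_{ℓ ∈ S} |Φ i ℓ|²) ‖f̂‖²`. Summing over `K` and using Parseval `‖f̂‖ = ‖f‖ ≠ 0` yields
`‖Φ_{K×S}‖_F ≥ 1`, so `|K| · |S|` is one of the numbers whose infimum is taken.
-/

open Finset Matrix

lemma Finset.sum_filter_ne_zero_norm_sq {ι E : Type*} [Fintype ι] [NormedAddCommGroup E]
    [DecidableEq E] (v : ι → E) : ∑ i ∈ univ.filter (fun i => v i ≠ 0), ‖v i‖ ^ 2 = ∑ i, ‖v i‖ ^ 2 :=
  sum_filter_of_ne fun i _ h => by simpa using h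

namespace Matrix

variable {m n 𝕜 : Type*} [Fintype n] [RCLike 𝕜]

lemma star_dotProduct_self_eq_sum_norm_sq_s2 (v : n → 𝕜) :
    star v ⬝ᵥ v = ((∑ i, ‖v i‖ ^ 2 : ℝ) : 𝕜) := by
  simp only [dotProduct, Pi.star_apply, RCLike.star_def, RCLike.conj_mul, RCLike.ofReal_sum,
    RCLike.ofReal_pow]

lemma sum_norm_sq_mulVec_of_mem_unitaryGroup_s2 [DecidableEq n] {U : Matrix n n 𝕜}
    (hU : U ∈ unitaryGroup n 𝕜) (v : n → 𝕜) :
    ∑ i, ‖(U *ᵥ v) i‖ ^ 2 = ∑ i, ‖v i‖ ^ 2 := by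
  apply RCLike.ofReal_injective (K := 𝕜)
  rw [← star_dotProduct_self_eq_sum_norm_sq_s2, ← star_dotProduct_self_eq_sum_norm_sq_s2, star_mulVec,
    dotProduct_mulVec, vecMul_vecMul, ← star_eq_conjTranspose, Unitary.star_mul_self_of_mem hU,
    vecMul_one]

lemma norm_sq_mulVec_apply_le {A : Matrix m n 𝕜} {g : n → 𝕜} {S : Finset n}
    (hg : ∀ ℓ ∉ S, g ℓ = 0) (i : m) :
    ‖(A *ᵥ g) i‖ ^ 2 ≤ (∑ ℓ ∈ S, ‖A i ℓ‖ ^ 2) * ∑ ℓ ∈ S, ‖g ℓ‖ ^ 2 := by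
  have hrow : (A *ᵥ g) i = ∑ ℓ ∈ S, A i ℓ * g ℓ :=
    (sum_subset (subset_univ S) fun ℓ _ hℓ => by simp [hg ℓ hℓ]).symm
  calc ‖(A *ᵥ g) i‖ ^ 2 ≤ (∑ ℓ ∈ S, ‖A i ℓ‖ * ‖g ℓ‖) ^ 2 := by
        rw [hrow]
        gcongr
        exact (norm_sum_le _ _).trans_eq (by simp only [norm_mul])
    _ ≤ (∑ ℓ ∈ S, ‖A i ℓ‖ ^ 2) * ∑ ℓ ∈ S, ‖g ℓ‖ ^ 2 := sum_mul_sq_le_sq_mul_sq S _ _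

lemma sum_norm_sq_mulVec_le {A : Matrix m n 𝕜} {g : n → 𝕜} {S : Finset n}
    (hg : ∀ ℓ ∉ S, g ℓ = 0) (K : Finset m) :
    ∑ i ∈ K, ‖(A *ᵥ g) i‖ ^ 2 ≤ (∑ i ∈ K, ∑ ℓ ∈ S, ‖A i ℓ‖ ^ 2) * ∑ ℓ ∈ S, ‖g ℓ‖ ^ 2 := by
  rw [sum_mul]
  exact sum_le_sum fun i _ => norm_sq_mulVec_apply_le hg i

lemma one_le_sum_norm_sq_on_supports [DecidableEq n] [DecidableEq 𝕜] {U : Matrix n n 𝕜}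
    (hU : U ∈ unitaryGroup n 𝕜) {f : n → 𝕜} (hf : f ≠ 0) :
    1 ≤ ∑ i ∈ univ.filter (fun i => f i ≠ 0),
      ∑ ℓ ∈ univ.filter (fun ℓ => (Uᴴ *ᵥ f) ℓ ≠ 0), ‖U i ℓ‖ ^ 2 := by
  set fhat := Uᴴ *ᵥ f
  have hrec : U *ᵥ fhat = f := by
    rw [mulVec_mulVec, ← star_eq_conjTranspose, Unitary.mul_star_self_of_mem hU, one_mulVec]
  have hparseval : ∑ ℓ, ‖fhat ℓ‖ ^ 2 = ∑ i, ‖f i‖ ^ 2 :=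
    sum_norm_sq_mulVec_of_mem_unitaryGroup_s2 (Unitary.star_mem hU) f
  have hpos : 0 < ∑ i, ‖f i‖ ^ 2 := by
    obtain ⟨i, hi⟩ := Function.ne_iff.mp hf
    exact sum_pos' (fun j _ => by positivity) ⟨i, mem_univ i, by positivity⟩
  have hbound := sum_norm_sq_mulVec_le (A := U) (g := fhat)
    (S := univ.filter (fun ℓ => fhat ℓ ≠ 0)) (by simp) (univ.filter (fun i => f i ≠ 0))
  rw [hrec, sum_filter_ne_zero_norm_sq, sum_filter_ne_zero_norm_sq, hparseval] at hbound
  exact le_of_mul_le_mul_right (by rwa [one_mul]) hpos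

end Matrix

/-- Frobenius-norm global uncertainty bound. -/
theorem stmt_2 (N : ℕ) (Φ : Matrix (Fin N) (Fin N) ℂ)
    (hΦ : Φ ∈ Matrix.unitaryGroup (Fin N) ℂ)
    (f : Fin N → ℂ) (hf : f ≠ 0)
    (fhat : Fin N → ℂ) (hfhat : fhat = Φᴴ.mulVec f) :
    sInf {m : ℕ | ∃ K S : Finset (Fin N),
        1 ≤ Real.sqrt (∑ i ∈ K, ∑ ℓ ∈ S, ‖Φ i ℓ‖ ^ 2) ∧ m = K.card * S.card} ≤
      (Finset.univ.filter (fun i => f i ≠ 0)).card *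
        (Finset.univ.filter (fun ℓ => fhat ℓ ≠ 0)).card := by
  subst hfhat
  exact Nat.sInf_le ⟨_, _, Real.one_le_sqrt.mpr (one_le_sum_norm_sq_on_supports hΦ hf), rfl⟩
end

section
/- If all entries of an N×N unitary matrix Φ have absolute value exactly N^{-1/2}, then for every nonzero f ∈ ℂ^N with f̂ = Φ* f, ‖f‖₀ · ‖f̂‖₀ ≥ N. -/
open Finset Matrix

/-!
An entry of `A v` only sees the support of `v`, so with entries of `A` bounded by `μ` the sup norm
satisfies `‖A v‖ ≤ μ |supp v| ‖v‖`. Applying this to `B f` and then to `f = A (B f)` and cancelling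
`‖f‖ > 0` gives `1 ≤ μ ν |supp f| |supp (B f)|`. For a flat unitary `Φ` take `A = Φ`, `B = Φᴴ`
and `μ = ν = N^{-1/2}`.
-/

namespace Matrix

variable {R m n : Type*} [Fintype n] [DecidableEq R]

theorem norm_mulVec_apply_le_mul_card_support [SeminormedRing R] (A : Matrix m n R) {μ : ℝ}
    (hA : ∀ i j, ‖A i j‖ ≤ μ) (v : n → R) (i : m) :
    ‖(A *ᵥ v) i‖ ≤ μ * #{j | v j ≠ 0} * ‖v‖ := by
  have hsupp : (A *ᵥ v) i = ∑ j with v j ≠ 0, A i j * v j :=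
    (sum_filter_of_ne fun j _ hj => right_ne_zero_of_mul hj).symm
  calc ‖(A *ᵥ v) i‖ ≤ ∑ j with v j ≠ 0, ‖A i j‖ * ‖v j‖ := by
        rw [hsupp]
        exact (norm_sum_le _ _).trans (sum_le_sum fun j _ => norm_mul_le _ _)
    _ ≤ ∑ j with v j ≠ 0, μ * ‖v‖ :=
        sum_le_sum fun j _ => mul_le_mul (hA i j) (norm_le_pi_norm v j) (norm_nonneg _)
          ((norm_nonneg _).trans (hA i j))
    _ = μ * #{j | v j ≠ 0} * ‖v‖ := by rw [sum_const, nsmul_eq_mul]; ring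

theorem norm_mulVec_le_mul_card_support [Fintype m] [SeminormedRing R] (A : Matrix m n R)
    {μ : ℝ} (hμ : 0 ≤ μ) (hA : ∀ i j, ‖A i j‖ ≤ μ) (v : n → R) :
    ‖A *ᵥ v‖ ≤ μ * #{j | v j ≠ 0} * ‖v‖ :=
  (pi_norm_le_iff_of_nonneg (by positivity)).2 (norm_mulVec_apply_le_mul_card_support A hA v)

theorem one_le_mul_card_support_mul_card_support [Fintype m] [NormedRing R]
    (A : Matrix m n R) (B : Matrix n m R) {μ ν : ℝ} (hμ : 0 ≤ μ) (hν : 0 ≤ ν)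
    (hA : ∀ i j, ‖A i j‖ ≤ μ) (hB : ∀ i j, ‖B i j‖ ≤ ν) {f : m → R} (hf : f ≠ 0)
    (hinv : A *ᵥ (B *ᵥ f) = f) :
    1 ≤ μ * ν * (#{i | f i ≠ 0} * #{j | (B *ᵥ f) j ≠ 0}) := by
  have hBf : ‖B *ᵥ f‖ ≤ ν * #{i | f i ≠ 0} * ‖f‖ := norm_mulVec_le_mul_card_support B hν hB f
  have hf_le : ‖f‖ ≤ μ * #{j | (B *ᵥ f) j ≠ 0} * (ν * #{i | f i ≠ 0} * ‖f‖) := by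
    calc ‖f‖ = ‖A *ᵥ (B *ᵥ f)‖ := by rw [hinv]
      _ ≤ μ * #{j | (B *ᵥ f) j ≠ 0} * ‖B *ᵥ f‖ := norm_mulVec_le_mul_card_support A hμ hA _
      _ ≤ _ := by gcongr
  have hf_pos : 0 < ‖f‖ := norm_pos_iff.2 hf
  nlinarith

end Matrix

/-- flat unitary matrices give uncertainty bound N. -/
theorem stmt_5 (N : ℕ) (Φ : Matrix (Fin N) (Fin N) ℂ)
    (hΦ : Φ ∈ Matrix.unitaryGroup (Fin N) ℂ)
    (hflat : ∀ i j, ‖Φ i j‖ = 1 / Real.sqrt N)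
    (f : Fin N → ℂ) (hf : f ≠ 0)
    (fhat : Fin N → ℂ) (hfhat : fhat = Φᴴ.mulVec f) :
    N ≤ (Finset.univ.filter (fun i => f i ≠ 0)).card *
        (Finset.univ.filter (fun ℓ => fhat ℓ ≠ 0)).card := by
  subst hfhat
  have hinv : Φ *ᵥ (Φᴴ *ᵥ f) = f := by
    rw [mulVec_mulVec, ← star_eq_conjTranspose, mem_unitaryGroup_iff.1 hΦ, one_mulVec]
  have hflat_star : ∀ i j, ‖Φᴴ i j‖ ≤ 1 / Real.sqrt N := fun i j => by
    rw [conjTranspose_apply, norm_star, hflat]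
  have hbound := one_le_mul_card_support_mul_card_support Φ Φᴴ (by positivity) (by positivity)
    (fun i j => (hflat i j).le) hflat_star hf hinv
  rcases N.eq_zero_or_pos with rfl | hN
  · exact Nat.zero_le _
  have hμν : 1 / Real.sqrt N * (1 / Real.sqrt N) = 1 / N := by
    rw [div_mul_div_comm, one_mul, Real.mul_self_sqrt N.cast_nonneg]
  rw [hμν, one_div, ← div_eq_inv_mul, one_le_div (by positivity)] at hbound
  exact_mod_cast hbound
end

section
/- For N ≥ 2, there exists an N×N real orthogonal matrix Φ whose columns are eigenvectors of the adjacency matrix of the complete graph K_N, and a nonzero vector f, such that ‖f‖₀ · ‖f̂‖₀ = 2 where f̂ = Φᵀ f. -/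
/-!
Complete the orthonormal pair formed by the normalized all-ones vector and
`(e_{i₀} - e_{i₁}) / √2` to an orthonormal basis of `ℝ^ι`, and let `Φ` have these basis vectors
as columns. The all-ones vector is an eigenvector of `J - I` for `|ι| - 1`; every other column is
orthogonal to it, so its entries sum to zero and it is an eigenvector for `-1`. The signal
`f = e_{i₀} - e_{i₁}` has two nonzero entries, while `Φᵀ f` lists the coordinates of `f` in the
basis, which is `√2` times a single basis vector.
-/

open Finset Matrix

theorem OrthonormalBasis.exists_apply_eq_pair {𝕜 E ι : Type*} [RCLike 𝕜] [NormedAddCommGroup E]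
    [InnerProductSpace 𝕜 E] [FiniteDimensional 𝕜 E] [Fintype ι] [DecidableEq ι]
    (hcard : Module.finrank 𝕜 E = Fintype.card ι) {i₀ i₁ : ι} (h : i₀ ≠ i₁) {x y : E}
    (hx : ‖x‖ = 1) (hy : ‖y‖ = 1) (hxy : inner 𝕜 x y = 0) :
    ∃ b : OrthonormalBasis ι 𝕜 E, b i₀ = x ∧ b i₁ = y := by
  set v : ι → E := Function.update (fun _ => y) i₀ x
  have hv : Orthonormal 𝕜 (({i₀, i₁} : Set ι).domRestrict v) := by
    have hyx : inner 𝕜 y x = 0 := inner_eq_zero_symm.mp hxy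
    rw [orthonormal_iff_ite]
    rintro ⟨i, hi | hi⟩ ⟨j, hj | hj⟩ <;> subst i j <;>
      simp [v, Subtype.ext_iff, h, h.symm, hxy, hyx, inner_self_eq_norm_sq_to_K, hx, hy]
  obtain ⟨b, hb⟩ := hv.exists_orthonormalBasis_extension_of_card_eq hcard
  exact ⟨b, by simpa [v] using hb i₀ (by simp), by simpa [v, h.symm] using hb i₁ (by simp)⟩

abbrev completeAdj (ι : Type*) [DecidableEq ι] : Matrix ι ι ℝ :=
  of fun i j => if i = j then 0 else 1

section CompleteGraph

variable {ι : Type*} [Fintype ι] [DecidableEq ι]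

theorem completeAdj_mulVec (v : ι → ℝ) : completeAdj ι *ᵥ v = fun i => (∑ j, v j) - v i := by
  ext i
  simp only [mulVec, dotProduct, of_apply, ite_mul, zero_mul, one_mul]
  rw [sum_ite, sum_const_zero, zero_add, filter_not, filter_eq, if_pos (mem_univ i),
    ← erase_eq, sum_erase_eq_sub (mem_univ i)]

theorem completeAdj_mulVec_const (c : ℝ) :
    completeAdj ι *ᵥ (fun _ => c) = ((Fintype.card ι : ℝ) - 1) • fun _ => c := by
  ext i
  simp [completeAdj_mulVec, sub_mul]

theorem completeAdj_mulVec_of_sum_eq_zero {v : ι → ℝ} (hv : ∑ i, v i = 0) :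
    completeAdj ι *ᵥ v = (-1 : ℝ) • v := by
  ext i
  simp [completeAdj_mulVec, hv]

theorem OrthonormalBasis.exists_completeAdj_mulVec_eq_smul
    (b : OrthonormalBasis ι ℝ (EuclideanSpace ℝ ι)) {i₀ : ι} {c : ℝ} (hb₀ : ∀ i, b i₀ i = c)
    (ℓ : ι) : ∃ μ : ℝ, completeAdj ι *ᵥ (fun i => b ℓ i) = μ • fun i => b ℓ i := by
  by_cases hℓ : ℓ = i₀
  · subst hℓ
    exact ⟨_, funext hb₀ ▸ completeAdj_mulVec_const c⟩
  · refine ⟨-1, completeAdj_mulVec_of_sum_eq_zero ?_⟩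
    have hc : c ≠ 0 := by
      rintro rfl
      exact b.orthonormal.ne_zero i₀ (by ext i; simp [hb₀])
    have horth := b.orthonormal.inner_eq_zero hℓ
    simp only [PiLp.inner_apply, hb₀, RCLike.inner_apply, conj_trivial, ← mul_sum] at horth
    exact (mul_eq_zero.mp horth).resolve_left hc

end CompleteGraph

namespace OrthonormalBasis

variable {ι : Type*} [Fintype ι]

theorem toMatrix_basisFun_apply (b : OrthonormalBasis ι ℝ (EuclideanSpace ℝ ι)) (i l : ι) :
    (EuclideanSpace.basisFun ι ℝ).toBasis.toMatrix b i l = b l i := by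
  simp [Module.Basis.toMatrix_apply]

theorem toMatrix_basisFun_transpose_mulVec
    (b : OrthonormalBasis ι ℝ (EuclideanSpace ℝ ι)) (x : ι → ℝ) :
    ((EuclideanSpace.basisFun ι ℝ).toBasis.toMatrix b)ᵀ *ᵥ x = b.repr (WithLp.toLp 2 x) := by
  ext l
  simp [mulVec, dotProduct, toMatrix_basisFun_apply, b.repr_apply_apply, PiLp.inner_apply,
    mul_comm]

theorem card_filter_toMatrix_basisFun_transpose_mulVec_ne_zero [DecidableEq ι]
    (b : OrthonormalBasis ι ℝ (EuclideanSpace ℝ ι))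
    {x : ι → ℝ} {r : ℝ} {i₁ : ι} (hr : r ≠ 0) (hx : WithLp.toLp 2 x = r • b i₁) :
    #{ℓ | (((EuclideanSpace.basisFun ι ℝ).toBasis.toMatrix b)ᵀ *ᵥ x) ℓ ≠ 0} = 1 := by
  rw [card_eq_one]
  refine ⟨i₁, ?_⟩
  ext ℓ
  rw [mem_filter_univ, mem_singleton, toMatrix_basisFun_transpose_mulVec, hx, map_smul,
    b.repr_self]
  by_cases hℓ : ℓ = i₁ <;> simp [hℓ, hr]

end OrthonormalBasis

theorem card_filter_single_sub_single_ne_zero {ι R : Type*} [Fintype ι] [DecidableEq ι] [Ring R]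
    [Nontrivial R] [DecidableEq R] {i₀ i₁ : ι} (h : i₀ ≠ i₁) :
    #{i | (Pi.single i₀ 1 - Pi.single i₁ 1 : ι → R) i ≠ 0} = 2 := by
  rw [← card_pair h]
  congr 1
  ext i
  by_cases hi₀ : i = i₀ <;> by_cases hi₁ : i = i₁ <;> simp [*, h.symm]

theorem exists_orthogonal_eigenbasis_uncertainty_two {ι : Type*} [Fintype ι] [DecidableEq ι]
    {i₀ i₁ : ι} (h : i₀ ≠ i₁) :
    ∃ Φ : Matrix ι ι ℝ, Φ ∈ Matrix.orthogonalGroup ι ℝ ∧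
      (∀ ℓ : ι, ∃ μ : ℝ, completeAdj ι *ᵥ (fun i => Φ i ℓ) = μ • fun i => Φ i ℓ) ∧
      ∃ f : ι → ℝ, f ≠ 0 ∧ #{i | f i ≠ 0} * #{ℓ | (Φᵀ *ᵥ f) ℓ ≠ 0} = 2 := by
  set one : EuclideanSpace ℝ ι := WithLp.toLp 2 fun _ => 1
  set f : ι → ℝ := Pi.single i₀ 1 - Pi.single i₁ 1
  set d : EuclideanSpace ℝ ι := WithLp.toLp 2 f
  have hone : one ≠ 0 := fun h0 => by simpa [one] using congr($h0 i₀)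
  have hf : f ≠ 0 := fun h0 => by simpa [f, h.symm] using congr_fun h0 i₀
  have hd : d ≠ 0 := by simpa [d] using hf
  have h_one_d : inner ℝ one d = 0 := by
    simp [one, d, f, PiLp.inner_apply, sum_sub_distrib]
  obtain ⟨b, hb₀, hb₁⟩ := OrthonormalBasis.exists_apply_eq_pair finrank_euclideanSpace h
    (norm_smul_inv_norm hone) (norm_smul_inv_norm hd)
    (by rw [inner_smul_left, inner_smul_right, h_one_d, mul_zero, mul_zero])
  have hb₀_const : ∀ i, b i₀ i = ‖one‖⁻¹ := by simp [hb₀, one]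
  have hd_eq : d = ‖d‖ • b i₁ := by
    rw [hb₁, smul_smul]
    simp [hd]
  refine ⟨(EuclideanSpace.basisFun ι ℝ).toBasis.toMatrix b,
    (EuclideanSpace.basisFun ι ℝ).toMatrix_orthonormalBasis_mem_unitary b, fun ℓ => ?_, f, hf, ?_⟩
  · simp only [OrthonormalBasis.toMatrix_basisFun_apply]
    exact b.exists_completeAdj_mulVec_eq_smul hb₀_const ℓ
  · rw [card_filter_single_sub_single_ne_zero h,
      b.card_filter_toMatrix_basisFun_transpose_mulVec_ne_zero (norm_ne_zero_iff.mpr hd) hd_eq]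

/-- for the complete graph there is an eigenbasis and a signal with
uncertainty product 2. -/
theorem stmt_11 (N : ℕ) (hN : 2 ≤ N) :
    ∃ Φ : Matrix (Fin N) (Fin N) ℝ,
      Φ ∈ Matrix.orthogonalGroup (Fin N) ℝ ∧
      (∀ ℓ : Fin N, ∃ μ : ℝ,
        (Matrix.of fun i j : Fin N => if i = j then (0 : ℝ) else 1).mulVec
            (fun i => Φ i ℓ) = μ • fun i => Φ i ℓ) ∧
      ∃ f : Fin N → ℝ, f ≠ 0 ∧
        (Finset.univ.filter (fun i => f i ≠ 0)).card *
          (Finset.univ.filter (fun ℓ => Φᵀ.mulVec f ℓ ≠ 0)).card = 2 := by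
  have : Nontrivial (Fin N) := Fin.nontrivial_iff_two_le.mpr hN
  obtain ⟨i₀, i₁, h⟩ := exists_pair_ne (Fin N)
  exact exists_orthogonal_eigenbasis_uncertainty_two h
end

section
/- Let Φ be a real N×N orthogonal matrix and define for a nonzero signal f the quantity U(f) = ‖f‖₀ · ‖Φᵀ f‖₀. Then min over nonzero f of U(f) ≥ min{|K||S| : ‖Φ_{K×S}‖_F ≥ 1}, and moreover this Frobenius quantity can be strictly larger than ‖Φ‖_∞^{-2}: for Φ = [[a, b],[−b, a]] with a² + b² = 1 and 1/2 < a² < 1, one has ‖Φ‖_∞^{-2} = 1/a² < 2 while min{|K||S| : ‖Φ_{K×S}‖_F ≥ 1} = 2. -/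
/-!
If `f` is supported on `K` and `Φᵀ f` on `S`, Cauchy–Schwarz on each coordinate `ℓ ∈ S` gives
`(Φᵀ f)_ℓ² ≤ ‖Φ_{K×{ℓ}}‖² ‖f‖²`; summing over `S` and using `‖Φᵀ f‖ = ‖f‖` (the rows of `Φ` are
orthonormal) yields `‖Φ_{K×S}‖_F ≥ 1`, so `|K| |S|` is a feasible block size. In the rotation
example every entry has square `a²` or `b² = 1 - a²`, both `< 1`, so no `1 × 1` block is feasible,
while a full row has Frobenius norm `1`.
-/

open Finset Matrix

/-- The sizes `|K| |S|` of the blocks `Φ_{K×S}` with `‖Φ_{K×S}‖_F ≥ 1`. -/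
def frobeniusFeasibleProducts {m n : Type*} (Φ : Matrix m n ℝ) : Set ℕ :=
  {k | ∃ (K : Finset m) (S : Finset n), 1 ≤ √(∑ i ∈ K, ∑ ℓ ∈ S, |Φ i ℓ| ^ 2) ∧ k = #K * #S}

section

variable {m n : Type*} [Fintype m] [Fintype n]

lemma sum_sq_transpose_mulVec [DecidableEq m] {Φ : Matrix m n ℝ} (hΦ : Φ * Φᵀ = 1)
    (f : m → ℝ) :
    ∑ ℓ, (Φᵀ *ᵥ f) ℓ ^ 2 = ∑ i, f i ^ 2 := by
  simp only [sq]
  calc (Φᵀ *ᵥ f) ⬝ᵥ (Φᵀ *ᵥ f) = f ⬝ᵥ (Φ *ᵥ (Φᵀ *ᵥ f)) := by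
        rw [dotProduct_mulVec f Φ, ← mulVec_transpose]
    _ = f ⬝ᵥ f := by rw [mulVec_mulVec, hΦ, one_mulVec]

omit [Fintype n] in
lemma transpose_mulVec_sq_le (Φ : Matrix m n ℝ) {f : m → ℝ} {K : Finset m}
    (hK : ∀ i ∉ K, f i = 0) (ℓ : n) :
    (Φᵀ *ᵥ f) ℓ ^ 2 ≤ (∑ i ∈ K, Φ i ℓ ^ 2) * ∑ i ∈ K, f i ^ 2 := by
  have hsupp : (Φᵀ *ᵥ f) ℓ = ∑ i ∈ K, Φ i ℓ * f i :=
    (sum_subset (subset_univ K) fun i _ hi => by simp [hK i hi]).symm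
  rw [hsupp]
  exact sum_mul_sq_le_sq_mul_sq K _ _

theorem card_mul_card_mem_frobeniusFeasibleProducts [DecidableEq m] {Φ : Matrix m n ℝ}
    (hΦ : Φ * Φᵀ = 1) {f : m → ℝ} (hf : f ≠ 0) {K : Finset m} {S : Finset n} (hK : ∀ i ∉ K, f i = 0)
    (hS : ∀ ℓ ∉ S, (Φᵀ *ᵥ f) ℓ = 0) :
    #K * #S ∈ frobeniusFeasibleProducts Φ := by
  refine ⟨K, S, Real.one_le_sqrt.mpr ?_, rfl⟩
  have hfK : ∑ i ∈ K, f i ^ 2 = ∑ i, f i ^ 2 :=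
    sum_subset (subset_univ K) fun i _ hi => by simp [hK i hi]
  have hpos : 0 < ∑ i, f i ^ 2 := by
    obtain ⟨i, hi⟩ := Function.ne_iff.mp hf
    exact (pow_pos (abs_pos.mpr hi) 2).trans_le <| by
      simpa only [sq_abs] using single_le_sum (fun j _ => sq_nonneg (f j)) (mem_univ i)
  have key : ∑ i, f i ^ 2 ≤ (∑ i ∈ K, ∑ ℓ ∈ S, |Φ i ℓ| ^ 2) * ∑ i, f i ^ 2 :=
    calc ∑ i, f i ^ 2 = ∑ ℓ, (Φᵀ *ᵥ f) ℓ ^ 2 := (sum_sq_transpose_mulVec hΦ f).symm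
      _ = ∑ ℓ ∈ S, (Φᵀ *ᵥ f) ℓ ^ 2 :=
        (sum_subset (subset_univ S) fun ℓ _ hℓ => by simp [hS ℓ hℓ]).symm
      _ ≤ ∑ ℓ ∈ S, (∑ i ∈ K, Φ i ℓ ^ 2) * ∑ i ∈ K, f i ^ 2 :=
        sum_le_sum fun ℓ _ => transpose_mulVec_sq_le Φ hK ℓ
      _ = (∑ i ∈ K, ∑ ℓ ∈ S, |Φ i ℓ| ^ 2) * ∑ i, f i ^ 2 := by
        simp only [← sum_mul, sum_comm (s := S), sq_abs, hfK]
  exact le_of_mul_le_mul_right (by linarith) hpos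

end

theorem two_le_of_mem_frobeniusFeasibleProducts {m n : Type*} {Φ : Matrix m n ℝ}
    (hΦ : ∀ i ℓ, |Φ i ℓ| ^ 2 < 1) {k : ℕ} (hk : k ∈ frobeniusFeasibleProducts Φ) : 2 ≤ k := by
  obtain ⟨K, S, hsum, rfl⟩ := hk
  rw [Real.one_le_sqrt, ← sum_product'] at hsum
  rw [← card_product]
  by_contra! hcard
  obtain hempty | hne := (K ×ˢ S).eq_empty_or_nonempty
  · norm_num [hempty] at hsum
  · have hlt : ∑ p ∈ K ×ˢ S, |Φ p.1 p.2| ^ 2 < #(K ×ˢ S) := by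
      simpa using sum_lt_sum_of_nonempty hne fun p _ => hΦ p.1 p.2
    have hle : (#(K ×ˢ S) : ℝ) ≤ 1 := by exact_mod_cast Nat.lt_succ_iff.mp hcard
    linarith

lemma rotation_entry_sq_lt_one {a b : ℝ} (hab : a ^ 2 + b ^ 2 = 1) (ha₀ : 0 < a ^ 2)
    (ha₁ : a ^ 2 < 1) (i ℓ : Fin 2) : |!![a, b; -b, a] i ℓ| ^ 2 < 1 := by
  rw [sq_abs]
  fin_cases i <;> fin_cases ℓ <;> simp [-sq_lt_one_iff_abs_lt_one] <;> linarith

lemma two_mem_frobeniusFeasibleProducts_rotation {a b : ℝ} (hab : a ^ 2 + b ^ 2 = 1) :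
    2 ∈ frobeniusFeasibleProducts !![a, b; -b, a] :=
  ⟨{0}, univ, by simp [Fin.sum_univ_two, sq_abs, hab], by simp⟩

/-- the Frobenius quantity lower-bounds the uncertainty product for
real orthogonal matrices, and a 2×2 rotation example shows it can strictly beat the
supremum bound. -/
theorem stmt_19 (N : ℕ) (Φ : Matrix (Fin N) (Fin N) ℝ)
    (hΦ : Φ ∈ Matrix.orthogonalGroup (Fin N) ℝ) :
    (∀ f : Fin N → ℝ, f ≠ 0 →
      sInf {m : ℕ | ∃ K S : Finset (Fin N),
          1 ≤ Real.sqrt (∑ i ∈ K, ∑ ℓ ∈ S, |Φ i ℓ| ^ 2) ∧ m = K.card * S.card} ≤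
        (Finset.univ.filter (fun i => f i ≠ 0)).card *
          (Finset.univ.filter (fun ℓ => Φᵀ.mulVec f ℓ ≠ 0)).card) ∧
    (∀ a b : ℝ, a ^ 2 + b ^ 2 = 1 → 1 / 2 < a ^ 2 → a ^ 2 < 1 →
      (1 / a ^ 2 < 2) ∧
      sInf {m : ℕ | ∃ K S : Finset (Fin 2),
          1 ≤ Real.sqrt (∑ i ∈ K, ∑ ℓ ∈ S, |(!![a, b; -b, a]) i ℓ| ^ 2) ∧
          m = K.card * S.card} = 2) := by
  refine ⟨fun f hf => Nat.sInf_le ?_, fun a b hab ha₂ ha₁ => ⟨?_, ?_⟩⟩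
  · exact card_mul_card_mem_frobeniusFeasibleProducts ((mem_orthogonalGroup_iff _ _).mp hΦ) hf
      (by simp) (by simp)
  · rw [div_lt_iff₀ (by linarith)]
    linarith
  · exact IsLeast.csInf_eq ⟨two_mem_frobeniusFeasibleProducts_rotation hab,
      fun k => two_le_of_mem_frobeniusFeasibleProducts
        (rotation_entry_sq_lt_one hab (by linarith) ha₁)⟩
end
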